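/- arXiv:1010.0205 — 4 statements merged into one kernel-verified Lean document; each statement's English description precedes it below -/
import Mathlib

section
/- Let V be an n-dimensional vector space over a field F with |F| ≥ 4, with basis a_1, ..., a_n, and let 1 ≤ k ≤ n. Any nonzero SL(V)-invariant subspace U of the k-th exterior power Λ^k V equals Λ^k V; that is, Λ^k V is an irreducible SL(V)-module. -/
/-!
Write `e s` for the wedge of the basis vectors indexed by a `k`-subset `s`. Diagonal maps of
determinant one act on the `e s` by scalars, and as `F` has an element `c ∉ {0, 1, -1}`, the map
scaling `b i` by `c` and `b j` by `c⁻¹` (with `i ∈ s \ t`, `j ∈ t \ s`) acts on `e s` and `e t`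
by the distinct scalars `c` and `c⁻¹`. Subtracting multiples of such images strips a nonzero
vector of `U` down to a single `e s`. The transvection `b i ↦ b i + b j` then sends `e s` to
`e s ± e (s - i + j)`, and every `k`-subset is reached from `s` by such exchanges, so `U`
contains all the `e t`, which span `⋀^k V`.
-/

open ExteriorAlgebra Set.powersetCard Function

namespace Function.Injective

variable {α β : Type*} [DecidableEq α] {r : α → β}

theorem update_of_notMem_range (hr : Injective r) (p : α) {j : β} (hj : j ∉ Set.range r) :
    Injective (update r p j) := by
  intro q q' h
  by_cases hq : q = p <;> by_cases hq' : q' = p <;> simp_all [hr.eq_iff]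

theorem range_update (hr : Injective r) (p : α) (j : β) :
    Set.range (update r p j) = insert j (Set.range r \ {r p}) := by
  ext x
  simp only [Set.mem_range, Set.mem_insert_iff, Set.mem_sdiff, Set.mem_singleton_iff]
  constructor
  · rintro ⟨q, rfl⟩
    rcases eq_or_ne q p with rfl | hq
    · exact .inl (update_self ..)
    · exact .inr ⟨⟨q, (update_of_ne hq ..).symm⟩, by rw [update_of_ne hq]; exact hr.ne hq⟩
  · rintro (rfl | ⟨⟨q, rfl⟩, hq⟩)
    · exact ⟨p, update_self ..⟩
    · exact ⟨q, update_of_ne (fun h => hq (congrArg r h)) ..⟩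

end Function.Injective

namespace Set.powersetCard

theorem forall_of_exchange {α : Type*} [DecidableEq α] {n : ℕ} {P : powersetCard α n → Prop}
    (hP : ∀ s t : powersetCard α n, ∀ i ∈ s, ∀ j ∉ s,
      (t : Set α) = insert j ((s : Set α) \ {i}) → P s → P t)
    {s : powersetCard α n} (hs : P s) (t : powersetCard α n) : P t := by
  induction hm : (t.val \ s.val).card generalizing s with
  | zero =>
    exact eq_iff_subset.2 (Finset.sdiff_eq_empty_iff_subset.1 (Finset.card_eq_zero.1 hm)) ▸ hs
  | succ m ih =>
    obtain ⟨j, hj⟩ : (t.val \ s.val).Nonempty := Finset.card_pos.1 (by omega)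
    obtain ⟨i, hi⟩ : (s.val \ t.val).Nonempty :=
      Finset.card_pos.1 (by rw [Finset.card_sdiff_comm (by simp)]; omega)
    rw [Finset.mem_sdiff] at hi hj
    let s' : powersetCard α n := ofCard (s := insert j (s.val.erase i)) <| by
      rw [Finset.card_insert_of_notMem (fun h => hj.2 (Finset.mem_of_mem_erase h)),
        Finset.card_erase_add_one hi.1, s.prop]
    have hs' : P s' := hP s s' i hi.1 j hj.2
      (by simp only [← coe_coe, s', val_ofCard, Finset.coe_insert, Finset.coe_erase]) hs
    have hcard : t.val \ s'.val = (t.val \ s.val).erase j := by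
      ext x
      simp only [s', val_ofCard, Finset.mem_sdiff, Finset.mem_insert, Finset.mem_erase]
      grind
    refine ih hs' ?_
    rw [hcard, Finset.card_erase_of_mem (Finset.mem_sdiff.2 hj), hm, Nat.add_sub_cancel]

end Set.powersetCard

namespace Submodule

variable {K M ι : Type*} [Field K] [AddCommGroup M] [Module K M]

-- `T - μ s` kills the `s`-component of the sum and rescales the others, the `t`-one by a unit.
theorem mem_of_sum_smul_mem_of_separating [DecidableEq ι] {U : Submodule K M} {e : ι → M}
    (hsep : ∀ s t, s ≠ t → ∃ (T : M →ₗ[K] M) (μ : ι → K),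
      (∀ x ∈ U, T x ∈ U) ∧ (∀ r, T (e r) = μ r • e r) ∧ μ s ≠ μ t)
    (S : Finset ι) (c : ι → K) (hS : ∑ r ∈ S, c r • e r ∈ U) {t : ι} (ht : t ∈ S)
    (hct : c t ≠ 0) : e t ∈ U := by
  induction S using Finset.strongInduction generalizing c with
  | H S ih =>
  by_cases hS1 : ∃ s ∈ S, s ≠ t
  · obtain ⟨s, hs, hst⟩ := hS1
    obtain ⟨T, μ, hTU, hTe, hμ⟩ := hsep s t hst
    have hsum : T (∑ r ∈ S, c r • e r) - μ s • ∑ r ∈ S, c r • e r =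
        ∑ r ∈ S.erase s, ((μ r - μ s) * c r) • e r := by
      rw [Finset.sum_erase _ (by rw [sub_self, zero_mul, zero_smul]), map_sum, Finset.smul_sum,
        ← Finset.sum_sub_distrib]
      refine Finset.sum_congr rfl fun r _ => ?_
      rw [map_smul, hTe, smul_smul, smul_smul, ← sub_smul]
      ring_nf
    refine ih _ (Finset.erase_ssubset hs) (fun r => (μ r - μ s) * c r) ?_
      (Finset.mem_erase.2 ⟨hst.symm, ht⟩) (mul_ne_zero (sub_ne_zero.2 hμ.symm) hct)
    exact hsum ▸ sub_mem (hTU _ hS) (smul_mem _ _ hS)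
  · push Not at hS1
    rw [Finset.eq_singleton_iff_unique_mem.2 ⟨ht, hS1⟩, Finset.sum_singleton] at hS
    exact (smul_mem_iff U hct).1 hS

end Submodule

theorem exists_ne_zero_ne_inv_of_four_le_mk {K : Type*} [Field K] (hK : 4 ≤ Cardinal.mk K) :
    ∃ c : K, c ≠ 0 ∧ c ≠ c⁻¹ := by
  classical
  obtain ⟨c, hc⟩ : ∃ c : K, c ∉ ({0, 1, -1} : Finset K) := by
    by_contra! h
    have : Cardinal.mk K ≤ ({0, 1, -1} : Finset K).card := by
      rw [← Cardinal.mk_coe_finset, ← Cardinal.mk_univ]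
      exact Cardinal.mk_le_mk_of_subset fun x _ => h x
    have h4 : (4 : Cardinal) ≤ 3 :=
      hK.trans (this.trans (by exact_mod_cast Finset.card_le_three))
    norm_num at h4
  simp only [Finset.mem_insert, Finset.mem_singleton, not_or] at hc
  refine ⟨c, hc.1, fun h => ?_⟩
  have : c * c = 1 := by rw [← mul_inv_cancel₀ hc.1, ← h]
  rcases mul_self_eq_one_iff.1 this with h1 | h1
  exacts [hc.2.1 h1, hc.2.2 h1]

namespace ExteriorAlgebra

section CommRing

variable {R M I : Type*} [CommRing R] [AddCommGroup M] [Module R M] {k : ℕ}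

theorem map_transvection_ιMulti (b : Module.Basis I R M) {r : Fin k → I} (hr : Injective r)
    (p : Fin k) (j : I) :
    map (LinearMap.transvection (b.coord (r p)) (b j)) (ιMulti R k (b ∘ r)) =
      ιMulti R k (b ∘ r) + ιMulti R k (b ∘ update r p j) := by
  have h : LinearMap.transvection (b.coord (r p)) (b j) ∘ b ∘ r =
      update (b ∘ r) p ((b ∘ r) p + b j) := by
    ext q
    rcases eq_or_ne q p with rfl | hq
    · simp [LinearMap.transvection.apply]
    · simp [LinearMap.transvection.apply, hq, hr.ne hq]
  rw [map_apply_ιMulti, h, AlternatingMap.map_update_add, update_eq_self, comp_update]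

variable [LinearOrder I]

theorem map_ιMulti_family_of_apply_eq_smul {f : M →ₗ[R] M} {v : I → M} {d : I → R}
    (hf : ∀ i, f (v i) = d i • v i) (s : Set.powersetCard I k) :
    map f (ιMulti_family R k v s) = (∏ i ∈ s.val, d i) • ιMulti_family R k v s := by
  rw [ιMulti_family, map_apply_ιMulti]
  conv_rhs => rw [← Finset.map_orderEmbOfFin_univ s.val s.prop, Finset.prod_map]
  rw [← AlternatingMap.map_smul_univ]
  exact congrArg _ (funext fun p => hf _)

theorem exists_perm_ιMulti_family_ofFinEmb_eq_sign_smul (v : I → M) {α : Fin k → I}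
    (hα : Injective α) : ∃ σ : Equiv.Perm (Fin k),
      ιMulti_family R k v (ofFinEmb k I ⟨α, hα⟩) = σ.sign • ιMulti R k (v ∘ α) := by
  set s := ofFinEmb k I ⟨α, hα⟩
  have hs : (s.val : Set I) = Set.range α := by simp [s]
  refine ⟨(s.val.orderIsoOfFin s.prop).toEquiv.trans
    ((Equiv.setCongr hs).trans (Equiv.ofInjective α hα).symm), ?_⟩
  rw [← AlternatingMap.map_perm, ιMulti_family, comp_assoc]
  congr
  ext p
  simp [Equiv.apply_ofInjective_symm]
  rfl

end CommRing

variable {K V ι : Type*} [Field K] [AddCommGroup V] [Module K V] [LinearOrder ι] {k : ℕ}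

-- The diagonal map `b i ↦ c • b i`, `b j ↦ c⁻¹ • b j` acts on `e r` by `c ^ ([i ∈ r] - [j ∈ r])`.
theorem exists_det_eq_one_separating [Fintype ι] (b : Module.Basis ι K V) {c : K} (hc0 : c ≠ 0)
    (hc : c ≠ c⁻¹) {s t : Set.powersetCard ι k} (hst : s ≠ t) :
    ∃ (f : V →ₗ[K] V) (μ : Set.powersetCard ι k → K), LinearMap.det f = 1 ∧
      (∀ r, map f (ιMulti_family K k b r) = μ r • ιMulti_family K k b r) ∧ μ s ≠ μ t := by
  obtain ⟨i, his, hit⟩ := (exists_mem_notMem_iff_ne s t).1 hst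
  obtain ⟨j, hjt, hjs⟩ := (exists_mem_notMem_iff_ne t s).1 hst.symm
  set d : ι → K := Pi.mulSingle i c * Pi.mulSingle j c⁻¹
  refine ⟨Matrix.toLin b b (Matrix.diagonal d), fun r => ∏ m ∈ r.val, d m, ?_,
    map_ιMulti_family_of_apply_eq_smul fun m =>
      (hasEigenvector_toLin_diagonal d m b).apply_eq_smul, ?_⟩
  · simp [d, LinearMap.det_toLin, Finset.prod_mul_distrib, hc0]
  · simpa [d, Finset.prod_mul_distrib, mem_coe_iff, his, hit, hjt, hjs] using hc

theorem ιMulti_family_mem_of_exchange (b : Module.Basis ι K V)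
    {U : Submodule K (ExteriorAlgebra K V)}
    (hU : ∀ f : V →ₗ[K] V, LinearMap.det f = 1 → ∀ x ∈ U, map f x ∈ U)
    {s t : Set.powersetCard ι k} {i j : ι} (hi : i ∈ s) (hj : j ∉ s)
    (ht : (t : Set ι) = insert j ((s : Set ι) \ {i})) (hs : ιMulti_family K k b s ∈ U) :
    ιMulti_family K k b t ∈ U := by
  set r := ofFinEmbEquiv.symm s
  have hr : Set.range r = s := Set.ext fun x => mem_range_ofFinEmbEquiv_symm_iff_mem s x
  obtain ⟨p, rfl⟩ : i ∈ Set.range r := hr ▸ hi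
  have hα := r.injective.update_of_notMem_range p (hr ▸ hj : j ∉ Set.range r)
  have hts : t = ofFinEmb k ι ⟨update r p j, hα⟩ := SetLike.coe_injective <| by
    rw [ht, coe_ofFinEmb, Embedding.coeFn_mk, r.injective.range_update, hr]
  have hjp : b.coord (r p) (b j) = 0 := by
    have hjr : j ≠ r p := fun h => hj (h ▸ hi)
    simp [hjr]
  have hdet : LinearMap.det (LinearMap.transvection (b.coord (r p)) (b j)) = 1 := by
    rw [← LinearEquiv.transvection.coe_toLinearMap hjp, ← LinearEquiv.coe_det,
      LinearEquiv.transvection.det_eq_one, Units.val_one]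
  have hmem := sub_mem (hU _ hdet _ hs) hs
  rw [ιMulti_family, map_transvection_ιMulti b r.injective, add_sub_cancel_left] at hmem
  obtain ⟨σ, hσ⟩ := exists_perm_ιMulti_family_ofFinEmb_eq_sign_smul (R := K) b hα
  rw [hts, hσ, Units.smul_def]
  exact zsmul_mem hmem _

theorem exists_ιMulti_family_mem [Fintype ι] (b : Module.Basis ι K V) {c : K} (hc0 : c ≠ 0)
    (hc : c ≠ c⁻¹) {U : Submodule K (ExteriorAlgebra K V)}
    (hU : ∀ f : V →ₗ[K] V, LinearMap.det f = 1 → ∀ x ∈ U, map f x ∈ U)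
    (hUle : U ≤ ⋀[K]^k V) (hU0 : U ≠ ⊥) : ∃ s, ιMulti_family K k b s ∈ U := by
  obtain ⟨u, hu, hu0⟩ := Submodule.exists_mem_ne_zero_of_ne_bot hU0
  have hspan := hUle hu
  rw [← exteriorPower.ιMulti_family_span_fixedDegree_of_span K b.span_eq,
    Submodule.mem_span_range_iff_exists_fun] at hspan
  obtain ⟨a, rfl⟩ := hspan
  obtain ⟨t, hat⟩ : ∃ t, a t ≠ 0 := by
    by_contra! h
    simp [h] at hu0
  refine ⟨t, U.mem_of_sum_smul_mem_of_separating (fun s t hst => ?_) Finset.univ a hu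
    (Finset.mem_univ t) hat⟩
  obtain ⟨f, μ, hf, hfμ, hμ⟩ := exists_det_eq_one_separating b hc0 hc hst
  exact ⟨map f, μ, hU f hf, hfμ, hμ⟩

end ExteriorAlgebra

theorem exteriorPower_sl_irreducible_general
    {F V : Type*} [Field F] [AddCommGroup V] [Module F V]
    (hF : 4 ≤ Cardinal.mk F)
    (n : ℕ) (b : Module.Basis (Fin n) F V)
    (k : ℕ)
    (U : Submodule F (ExteriorAlgebra F V))
    (hUle : U ≤ ⋀[F]^k V) (hU0 : U ≠ ⊥)
    (hinv : ∀ g : V ≃ₗ[F] V, LinearMap.det (g : V →ₗ[F] V) = 1 →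
      ∀ x ∈ U, ExteriorAlgebra.map (g : V →ₗ[F] V) x ∈ U) :
    U = ⋀[F]^k V := by
  have := Module.Free.of_basis b
  have := Module.Finite.of_basis b
  have hU : ∀ f : V →ₗ[F] V, LinearMap.det f = 1 → ∀ x ∈ U, ExteriorAlgebra.map f x ∈ U := by
    intro f hf
    have hg := LinearMap.coe_equivOfIsUnitDet (f := f) (by rw [hf]; exact isUnit_one)
    rw [← hg]
    exact hinv _ (by rw [hg, hf])
  obtain ⟨c, hc0, hc⟩ := exists_ne_zero_ne_inv_of_four_le_mk hF
  obtain ⟨s, hs⟩ := exists_ιMulti_family_mem b hc0 hc hU hUle hU0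
  refine le_antisymm hUle ?_
  rw [← exteriorPower.ιMulti_family_span_fixedDegree_of_span F b.span_eq, Submodule.span_le]
  rintro _ ⟨t, rfl⟩
  exact forall_of_exchange (fun _ _ _ hi _ hj ht => ιMulti_family_mem_of_exchange b hU hi hj ht)
    hs t

/-- If `V` is an `n`-dimensional vector space over a field `F` with at least `4` elements
and `1 ≤ k ≤ n`, then any nonzero `SL(V)`-invariant subspace of the `k`-th exterior
power `⋀^k V` is all of `⋀^k V`: the exterior power is an irreducible `SL(V)`-module. -/
theorem exteriorPower_sl_irreducible
    {F V : Type*} [Field F] [AddCommGroup V] [Module F V]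
    (hF : 4 ≤ Cardinal.mk F)
    (n : ℕ) (b : Module.Basis (Fin n) F V)
    (k : ℕ) (hk1 : 1 ≤ k) (hkn : k ≤ n)
    (U : Submodule F (ExteriorAlgebra F V))
    (hUle : U ≤ ⋀[F]^k V) (hU0 : U ≠ ⊥)
    (hinv : ∀ g : V ≃ₗ[F] V, LinearMap.det (g : V →ₗ[F] V) = 1 →
      ∀ x ∈ U, ExteriorAlgebra.map (g : V →ₗ[F] V) x ∈ U) :
    U = ⋀[F]^k V :=
  exteriorPower_sl_irreducible_general hF n b k U hUle hU0 hinv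
end

section
/- Let V be a vector space of dimension 2n ≥ 4 over a field F with a nondegenerate symplectic or Hermitian form f of Witt index n, and let W ≤ V be a nondegenerate subspace of dimension 2n−2 and Witt index n−1. Then for every totally isotropic 1-dimensional subspace A and totally isotropic 3-dimensional subspace C with A ⊆ C, either exactly one or all of the totally isotropic 2-dimensional subspaces K with A ⊆ K ⊆ C satisfy K ∩ W ≠ {0}. -/
/-!
Since `dim C + dim W = 3 + (2n - 2) > 2n = dim V`, the subspace `D = C ∩ W` is nonzero, and a
plane `K ≤ C` meets `W` exactly when it meets `D`. If `dim D ≥ 2`, every plane of the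
`3`-space `C` meets `D`. If `D` is a point, a plane meets it only by containing it; so either
`A = D` and every plane through `A` meets `W`, or `A ⊔ D` is the only one that does.
Every subspace of the totally isotropic `C` is totally isotropic.
-/

open Module

/-- A subspace is totally isotropic for the form `f` if `f` vanishes on it. -/
def TotIso {F V : Type*} [Field F] [AddCommGroup V] [Module F V]
    (f : V → V → F) (U : Submodule F V) : Prop :=
  ∀ u ∈ U, ∀ v ∈ U, f u v = 0

open Submodule

theorem TotIso.mono {F V : Type*} [Field F] [AddCommGroup V] [Module F V] {f : V → V → F}
    {U U' : Submodule F V} (h : TotIso f U') (hle : U ≤ U') : TotIso f U :=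
  fun u hu v hv => h u (hle hu) v (hle hv)

namespace Submodule

variable {K V : Type*} [DivisionRing K] [AddCommGroup V] [Module K V] [FiniteDimensional K V]

theorem inf_ne_bot_of_finrank_lt_add {U W C : Submodule K V} (hU : U ≤ C) (hW : W ≤ C)
    (h : finrank K C < finrank K U + finrank K W) : U ⊓ W ≠ ⊥ := by
  intro hUW
  have hsum := finrank_sup_add_finrank_inf_eq U W
  rw [hUW, finrank_bot] at hsum
  have := finrank_mono (sup_le hU hW)
  omega

theorem existsUnique_finrank_eq_two_inf_ne_bot {A D C : Submodule K V}
    (hA : finrank K A = 1) (hD : finrank K D = 1) (hAD : ¬A ≤ D) (hAC : A ≤ C) (hDC : D ≤ C) :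
    ∃! P : Submodule K V, (finrank K P = 2 ∧ A ≤ P ∧ P ≤ C) ∧ P ⊓ D ≠ ⊥ := by
  have hD_atom : IsAtom D := isAtom_iff_finrank_eq_one.mpr hD
  have hAD_bot : A ⊓ D = ⊥ :=
    disjoint_iff.mp ((isAtom_iff_finrank_eq_one.mpr hA).not_le_iff_disjoint.mp hAD)
  have hsup : finrank K ↥(A ⊔ D) = 2 := by
    have hsum := finrank_sup_add_finrank_inf_eq A D
    rw [hAD_bot, finrank_bot] at hsum
    omega
  refine ⟨A ⊔ D, ⟨⟨hsup, le_sup_left, sup_le hAC hDC⟩, ?_⟩, ?_⟩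
  · rw [inf_eq_right.mpr le_sup_right]
    exact hD_atom.ne_bot
  · rintro P ⟨⟨hP, hAP, -⟩, hPD⟩
    have hDP : D ≤ P := hD_atom.not_disjoint_iff_le.mp (by rwa [disjoint_comm, disjoint_iff])
    exact (eq_of_le_of_finrank_eq (sup_le hAP hDP) (by omega)).symm

theorem existsUnique_or_forall_inf_ne_bot {A C W : Submodule K V}
    (hA : finrank K A = 1) (hC : finrank K C = 3) (hAC : A ≤ C) (hCW : C ⊓ W ≠ ⊥) :
    (∃! P : Submodule K V, (finrank K P = 2 ∧ A ≤ P ∧ P ≤ C) ∧ P ⊓ W ≠ ⊥) ∨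
      ∀ P : Submodule K V, finrank K P = 2 → A ≤ P → P ≤ C → P ⊓ W ≠ ⊥ := by
  have hmeet : ∀ P ≤ C, P ⊓ (C ⊓ W) = P ⊓ W := fun P hP => by
    rw [← inf_assoc, inf_eq_left.mpr hP]
  by_cases hAW : A ≤ W
  · refine Or.inr fun P _ hAP _ hPW => ?_
    exact (isAtom_iff_finrank_eq_one.mpr hA).ne_bot (le_bot_iff.mp (hPW ▸ le_inf hAP hAW))
  have hD_pos : finrank K ↥(C ⊓ W) ≠ 0 := fun h => hCW (finrank_eq_zero.mp h)
  obtain hD | hD : finrank K ↥(C ⊓ W) = 1 ∨ 2 ≤ finrank K ↥(C ⊓ W) := by omega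
  · left
    refine (existsUnique_congr fun P => ?_).mp <| existsUnique_finrank_eq_two_inf_ne_bot hA hD
      (fun h => hAW (h.trans inf_le_right)) hAC inf_le_left
    exact and_congr_right fun hP => by rw [hmeet P hP.2.2]
  · refine Or.inr fun P hP _ hPC => ?_
    rw [← hmeet P hPC]
    exact inf_ne_bot_of_finrank_lt_add hPC inf_le_left (by omega)

end Submodule

theorem grassmannian_line_meets_hyperplane_general
    {F V : Type*} [Field F] [AddCommGroup V] [Module F V] [FiniteDimensional F V]
    (n : ℕ) (hdim : finrank F V = 2 * n)
    (f : V → V → F)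
    (W : Submodule F V) (hWdim : finrank F W = 2 * n - 2)
    (A C : Submodule F V) (hAdim : finrank F A = 1)
    (hC : TotIso f C) (hCdim : finrank F C = 3) (hAC : A ≤ C) :
    (∃! K : Submodule F V,
        (TotIso f K ∧ finrank F K = 2 ∧ A ≤ K ∧ K ≤ C) ∧ K ⊓ W ≠ ⊥) ∨
    (∀ K : Submodule F V,
        TotIso f K → finrank F K = 2 → A ≤ K → K ≤ C → K ⊓ W ≠ ⊥) := by
  have hCW : C ⊓ W ≠ ⊥ :=
    inf_ne_bot_of_finrank_lt_add (C := ⊤) le_top le_top (by rw [finrank_top]; omega)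
  refine (existsUnique_or_forall_inf_ne_bot hAdim hCdim hAC hCW).imp (fun h => ?_)
    (fun h K _ => h K)
  refine (existsUnique_congr fun K => ?_).mp h
  exact and_congr_left fun _ =>
    ⟨fun hK => ⟨hC.mono hK.2.2, hK⟩, fun hK => hK.2⟩

/-- Let `V` be a `2n`-dimensional (`n ≥ 2`) space with a nondegenerate symplectic or
Hermitian form `f` of Witt index `n`, and let `W ≤ V` be a nondegenerate subspace of
dimension `2n − 2` and Witt index `n − 1`.  Then for every totally isotropic `1`-space
`A` and totally isotropic `3`-space `C` with `A ⊆ C`, either exactly one or all of the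
totally isotropic `2`-spaces `K` with `A ⊆ K ⊆ C` meet `W` nontrivially. -/
theorem grassmannian_line_meets_hyperplane
    {F V : Type*} [Field F] [AddCommGroup V] [Module F V] [FiniteDimensional F V]
    (n : ℕ) (hn : 2 ≤ n) (hdim : finrank F V = 2 * n)
    (σ : F ≃+* F) (hσ : ∀ c, σ (σ c) = c)
    (f : V → V → F)
    (hadd1 : ∀ x y z : V, f (x + y) z = f x z + f y z)
    (hsmul1 : ∀ (c : F) (x y : V), f (c • x) y = c * f x y)
    (hadd2 : ∀ x y z : V, f x (y + z) = f x y + f x z)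
    (hsmul2 : ∀ (c : F) (x y : V), f x (c • y) = σ c * f x y)
    (hcase : ((∀ c, σ c = c) ∧ (∀ v : V, f v v = 0)) ∨
      ((∃ c, σ c ≠ c) ∧ (∀ x y : V, f x y = σ (f y x))))
    (hnd : ∀ v : V, (∀ w : V, f v w = 0) → v = 0)
    (hWitt : (∃ U : Submodule F V, TotIso f U ∧ finrank F U = n) ∧
      (∀ U : Submodule F V, TotIso f U → finrank F U ≤ n))
    (W : Submodule F V) (hWdim : finrank F W = 2 * n - 2)
    (hWnd : ∀ v ∈ W, (∀ w ∈ W, f w v = 0) → v = 0)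
    (hWWitt : (∃ U : Submodule F V, U ≤ W ∧ TotIso f U ∧ finrank F U = n - 1) ∧
      (∀ U : Submodule F V, U ≤ W → TotIso f U → finrank F U ≤ n - 1))
    (A C : Submodule F V) (hA : TotIso f A) (hAdim : finrank F A = 1)
    (hC : TotIso f C) (hCdim : finrank F C = 3) (hAC : A ≤ C) :
    (∃! K : Submodule F V,
        (TotIso f K ∧ finrank F K = 2 ∧ A ≤ K ∧ K ≤ C) ∧ K ⊓ W ≠ ⊥) ∨
    (∀ K : Submodule F V,
        TotIso f K → finrank F K = 2 → A ≤ K → K ≤ C → K ⊓ W ≠ ⊥) :=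
  grassmannian_line_meets_hyperplane_general n hdim f W hWdim A C hAdim hC hCdim hAC
end

section
/- Let V be a 4-dimensional vector space over F with a nondegenerate σ-Hermitian form h and hyperbolic basis e_1, e_2, e_3, e_4 (h(e_i, e_j) = 0 unless {i,j} = {1,3} or {2,4}, where it is 1). For scalars a, b ∈ F \ {0} and c in the fixed field of σ, and ε ∈ F with σ(ε) = −ε, the vectors D_a = e_1 + a·e_2 + c·ε·e_3 − (c·ε/σ(a))·e_4 and D_b (defined analogously) satisfy h(D_a, D_b) = c·ε·(a/b − σ(b)/σ(a)). In particular h(D_a, D_b) = 0 if and only if c·ε = 0 or a·σ(a) = b·σ(b). -/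
/-! Expanding `h` sesquilinearly in the hyperbolic basis leaves only the pairings of `e_1` with
`e_3` and of `e_2` with `e_4`. The two contributions of the `e_1, e_3` coordinates are `σ(cε)` and
`cε`, which cancel because `σ(cε) = −cε`; the `e_2, e_4` coordinates give `cε (a/b − σ b/σ a)`. -/

theorem hyperbolic_apply_of_gram {R M : Type*} [CommRing R] [AddCommGroup M] [Module R M]
    (σ : R →+* R) (B : M →ₗ[R] M →ₛₗ[σ] R) (e : Fin 4 → M)
    (hgram : ∀ i j : Fin 4, B (e i) (e j) =
      if ({i, j} : Finset (Fin 4)) = {0, 2} ∨ ({i, j} : Finset (Fin 4)) = {1, 3}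
      then 1 else 0)
    (x₀ x₁ x₂ x₃ y₀ y₁ y₂ y₃ : R) :
    B (x₀ • e 0 + x₁ • e 1 + x₂ • e 2 + x₃ • e 3) (y₀ • e 0 + y₁ • e 1 + y₂ • e 2 + y₃ • e 3) =
      x₀ * σ y₂ + x₂ * σ y₀ + x₁ * σ y₃ + x₃ * σ y₁ := by
  simp only [map_add, map_smulₛₗ, LinearMap.add_apply, LinearMap.smul_apply, hgram]
  simp +decide only [if_true, if_false]
  simp only [RingHom.id_apply, smul_eq_mul]
  ring

theorem mul_div_sub_div_eq_zero_iff {F : Type*} [Field F] {u a b a' b' : F} (hb : b ≠ 0)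
    (ha' : a' ≠ 0) : u * (a / b - b' / a') = 0 ↔ u = 0 ∨ a * a' = b * b' := by
  rw [mul_eq_zero, sub_eq_zero, div_eq_div_iff hb ha', mul_comm b']

theorem hermitian_Da_Db_inner_general
    {F V : Type*} [Field F] [AddCommGroup V] [Module F V]
    (σ : F ≃+* F) (hσ : ∀ x, σ (σ x) = x)
    (h : V → V → F)
    (hadd1 : ∀ x y z : V, h (x + y) z = h x z + h y z)
    (hsmul1 : ∀ (t : F) (x y : V), h (t • x) y = t * h x y)
    (hadd2 : ∀ x y z : V, h x (y + z) = h x y + h x z)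
    (hsmul2 : ∀ (t : F) (x y : V), h x (t • y) = σ t * h x y)
    (e : Module.Basis (Fin 4) F V)
    (hgram : ∀ i j : Fin 4, h (e i) (e j) =
      if ({i, j} : Finset (Fin 4)) = {0, 2} ∨ ({i, j} : Finset (Fin 4)) = {1, 3}
      then 1 else 0)
    (a b c ε : F) (ha : a ≠ 0) (hb : b ≠ 0) (hc : σ c = c) (hε : σ ε = -ε)
    (Da Db : V)
    (hDa : Da = e 0 + a • e 1 + (c * ε) • e 2 - (c * ε / σ a) • e 3)
    (hDb : Db = e 0 + b • e 1 + (c * ε) • e 2 - (c * ε / σ b) • e 3) :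
    h Da Db = c * ε * (a / b - σ b / σ a) ∧
      (h Da Db = 0 ↔ c * ε = 0 ∨ a * σ a = b * σ b) := by
  let B : V →ₗ[F] V →ₛₗ[(σ : F →+* F)] F :=
    LinearMap.mk₂'ₛₗ (RingHom.id F) (σ : F →+* F) h hadd1 hsmul1 hadd2 hsmul2
  have hcoord (t : F) : e 0 + t • e 1 + (c * ε) • e 2 - (c * ε / σ t) • e 3 =
      (1 : F) • e 0 + t • e 1 + (c * ε) • e 2 + (-(c * ε / σ t)) • e 3 := by
    rw [one_smul, neg_smul, sub_eq_add_neg]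
  have hDaDb : h Da Db = c * ε * (a / b - σ b / σ a) := by
    change B Da Db = _
    rw [hDa, hDb, hcoord, hcoord, hyperbolic_apply_of_gram (σ : F →+* F) B e hgram]
    simp only [RingHom.coe_coe, map_neg, map_div₀, map_mul, map_one, hc, hε, hσ]
    field_simp
    ring
  exact ⟨hDaDb, hDaDb ▸ mul_div_sub_div_eq_zero_iff hb (map_ne_zero σ |>.mpr ha)⟩

/-- In a `4`-dimensional nondegenerate `σ`-Hermitian space with hyperbolic basis
`e_1, e_2, e_3, e_4`, for nonzero `a, b`, `c` fixed by `σ` and `ε` with `σ ε = −ε`, the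
vectors `D_a = e_1 + a e_2 + cε e_3 − (cε/σ a) e_4` and `D_b` (defined analogously)
satisfy `h(D_a, D_b) = cε (a/b − σ b/σ a)`; in particular `h(D_a, D_b) = 0` iff
`cε = 0` or `a σ a = b σ b`. -/
theorem hermitian_Da_Db_inner
    {F V : Type*} [Field F] [AddCommGroup V] [Module F V]
    (σ : F ≃+* F) (hσ : ∀ x, σ (σ x) = x) (hσne : ∃ x, σ x ≠ x)
    (h : V → V → F)
    (hadd1 : ∀ x y z : V, h (x + y) z = h x z + h y z)
    (hsmul1 : ∀ (t : F) (x y : V), h (t • x) y = t * h x y)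
    (hadd2 : ∀ x y z : V, h x (y + z) = h x y + h x z)
    (hsmul2 : ∀ (t : F) (x y : V), h x (t • y) = σ t * h x y)
    (hherm : ∀ x y : V, h x y = σ (h y x))
    (hnd : ∀ v : V, (∀ w : V, h v w = 0) → v = 0)
    (e : Module.Basis (Fin 4) F V)
    (hgram : ∀ i j : Fin 4, h (e i) (e j) =
      if ({i, j} : Finset (Fin 4)) = {0, 2} ∨ ({i, j} : Finset (Fin 4)) = {1, 3}
      then 1 else 0)
    (a b c ε : F) (ha : a ≠ 0) (hb : b ≠ 0) (hc : σ c = c) (hε : σ ε = -ε)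
    (Da Db : V)
    (hDa : Da = e 0 + a • e 1 + (c * ε) • e 2 - (c * ε / σ a) • e 3)
    (hDb : Db = e 0 + b • e 1 + (c * ε) • e 2 - (c * ε / σ b) • e 3) :
    h Da Db = c * ε * (a / b - σ b / σ a) ∧
      (h Da Db = 0 ↔ c * ε = 0 ∨ a * σ a = b * σ b) :=
  hermitian_Da_Db_inner_general σ hσ h hadd1 hsmul1 hadd2 hsmul2 e hgram a b c ε ha hb hc hε Da Db
    hDa hDb
end

section
/- Let V be a 2n-dimensional vector space over F with a nondegenerate symplectic form f (char F ≠ 2), n ≥ 2. For totally isotropic 2-dimensional subspaces x ≠ y of V, exactly one of the following holds: (1) dim(x ∩ y) = 1 and span(x, y) is totally isotropic; (2) x ∩ y = 0 and span(x, y) is totally isotropic; (3) dim(x ∩ y) = 1 and span(x,y) is not totally isotropic; (4) x ∩ y = 0 and dim(rad(span(x,y))) = 2; (5) x ∩ y = 0 and span(x, y) is nondegenerate. -/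
/-!
For totally isotropic `x`, `y` with `x ⊓ y = ⊥`, the radical of `x ⊔ y` splits as
`(x ⊓ y^⊥) ⊕ (y ⊓ x^⊥)`. Nondegeneracy gives `x ⊓ y^⊥ = (x^⊥ ⊔ y)^⊥`, and counting dimensions
shows that both summands have the same dimension `a`. Hence `dim rad (x ⊔ y) = 2a ∈ {0, 2, 4}`,
and `a = 2` means that `x ⊔ y` is totally isotropic. When `x ⊓ y ≠ ⊥` it is a line, because
`x ≠ y`, and only the total isotropy of `x ⊔ y` remains to be decided.
-/

open Module LinearMap

namespace LinearMap.BilinForm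

section CommRing

variable {R M : Type*} [CommRing R] [AddCommGroup M] [Module R M] (B : LinearMap.BilinForm R M)

theorem orthogonal_sup (U W : Submodule R M) :
    B.orthogonal (U ⊔ W) = B.orthogonal U ⊓ B.orthogonal W := by
  have key : ∀ (N : Submodule R M) (m : M), m ∈ B.orthogonal N ↔ N ≤ ker (B.flip m) :=
    fun _ _ => Iff.rfl
  ext m
  rw [Submodule.mem_inf, key, key, key, sup_le_iff]

theorem sup_inf_orthogonal_sup_eq {x y : Submodule R M}
    (hx : x ≤ B.orthogonal x) (hy : y ≤ B.orthogonal y) :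
    (x ⊔ y) ⊓ B.orthogonal (x ⊔ y) = (x ⊓ B.orthogonal y) ⊔ (y ⊓ B.orthogonal x) := by
  rw [orthogonal_sup]
  refine le_antisymm ?_ (sup_le ?_ ?_)
  · rintro w ⟨hw, hwx, hwy⟩
    obtain ⟨u, hu, v, hv, rfl⟩ := Submodule.mem_sup.mp hw
    refine Submodule.add_mem_sup ⟨hu, ?_⟩ ⟨hv, ?_⟩
    · simpa using sub_mem hwy (hy hv)
    · simpa using sub_mem hwx (hx hu)
  · exact le_inf (inf_le_left.trans le_sup_left) (le_inf (inf_le_left.trans hx) inf_le_right)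
  · exact le_inf (inf_le_left.trans le_sup_right) (le_inf inf_le_right (inf_le_left.trans hy))

end CommRing

variable {K V : Type*} [Field K] [AddCommGroup V] [Module K V] [FiniteDimensional K V]
  {B : LinearMap.BilinForm K V}

theorem finrank_inf_orthogonal_add_finrank (hB : B.Nondegenerate) (hB₀ : B.IsRefl)
    (x y : Submodule K V) :
    finrank K ↥(x ⊓ B.orthogonal y) + finrank K y
      = finrank K ↥(y ⊓ B.orthogonal x) + finrank K x := by
  have hdual : x ⊓ B.orthogonal y = B.orthogonal (B.orthogonal x ⊔ y) := by
    rw [orthogonal_sup, orthogonal_orthogonal hB hB₀]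
  have hsup := Submodule.finrank_sup_add_finrank_inf_eq (B.orthogonal x) y
  rw [hdual, finrank_orthogonal hB, inf_comm]
  rw [finrank_orthogonal hB] at hsup
  have := Submodule.finrank_le (B.orthogonal x ⊔ y)
  have := Submodule.finrank_le x
  omega

theorem finrank_sup_inf_orthogonal_sup (hB : B.Nondegenerate) (hB₀ : B.IsRefl)
    {x y : Submodule K V} (hx : x ≤ B.orthogonal x) (hy : y ≤ B.orthogonal y)
    (hxy : x ⊓ y = ⊥) (hdim : finrank K x = finrank K y) :
    finrank K ↥((x ⊔ y) ⊓ B.orthogonal (x ⊔ y)) = 2 * finrank K ↥(x ⊓ B.orthogonal y) := by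
  have hdisj : (x ⊓ B.orthogonal y) ⊓ (y ⊓ B.orthogonal x) = ⊥ :=
    eq_bot_iff.mpr (hxy ▸ inf_le_inf inf_le_left inf_le_left)
  have hsum := Submodule.finrank_sup_add_finrank_inf_eq (x ⊓ B.orthogonal y) (y ⊓ B.orthogonal x)
  have hsymm := finrank_inf_orthogonal_add_finrank hB hB₀ x y
  rw [hdisj, finrank_bot] at hsum
  rw [sup_inf_orthogonal_sup_eq B hx hy]
  omega

theorem le_orthogonal_self_iff_finrank_inf_eq (B : LinearMap.BilinForm K V) (W : Submodule K V) :
    W ≤ B.orthogonal W ↔ finrank K ↥(W ⊓ B.orthogonal W) = finrank K W :=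
  inf_eq_left.symm.trans
    ⟨fun h => by rw [h], Submodule.eq_of_le_of_finrank_eq inf_le_left⟩

end LinearMap.BilinForm

theorem Submodule.finrank_inf_lt_of_ne {K V : Type*} [Field K] [AddCommGroup V] [Module K V]
    [FiniteDimensional K V] {x y : Submodule K V} (hdim : finrank K x = finrank K y)
    (hxy : x ≠ y) : finrank K ↥(x ⊓ y) < finrank K x := by
  refine (Submodule.finrank_mono inf_le_left).lt_of_ne fun h => hxy ?_
  have hle : x ≤ y := Submodule.eq_of_le_of_finrank_eq inf_le_left h ▸ inf_le_right
  exact Submodule.eq_of_le_of_finrank_eq hle hdim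

theorem ti_two_spaces_five_relations_general
    {F V : Type*} [Field F] [AddCommGroup V] [Module F V] [FiniteDimensional F V]
    (B : LinearMap.BilinForm F V) (halt : B.IsAlt) (hnd : B.Nondegenerate)
    (x y : Submodule F V)
    (hx : x ≤ B.orthogonal x) (hy : y ≤ B.orthogonal y)
    (hxdim : finrank F x = 2) (hydim : finrank F y = 2) (hxy : x ≠ y) :
    ∃! i : Fin 5,
      ![finrank F ↥(x ⊓ y) = 1 ∧ (x ⊔ y) ≤ B.orthogonal (x ⊔ y),
        x ⊓ y = ⊥ ∧ (x ⊔ y) ≤ B.orthogonal (x ⊔ y),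
        finrank F ↥(x ⊓ y) = 1 ∧ ¬ (x ⊔ y) ≤ B.orthogonal (x ⊔ y),
        x ⊓ y = ⊥ ∧ finrank F ↥((x ⊔ y) ⊓ B.orthogonal (x ⊔ y)) = 2,
        x ⊓ y = ⊥ ∧ (x ⊔ y) ⊓ B.orthogonal (x ⊔ y) = ⊥] i := by
  have hmeet : finrank F ↥(x ⊓ y) < 2 :=
    hxdim ▸ Submodule.finrank_inf_lt_of_ne (hxdim.trans hydim.symm) hxy
  have hjoin := Submodule.finrank_sup_add_finrank_inf_eq x y
  have hrad : finrank F ↥(x ⊓ y) = 0 →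
      ∃ a ≤ 2, finrank F ↥((x ⊔ y) ⊓ B.orthogonal (x ⊔ y)) = 2 * a := by
    intro hb
    rw [B.finrank_sup_inf_orthogonal_sup hnd halt.isRefl hx hy
      (Submodule.finrank_eq_zero.mp hb) (hxdim.trans hydim.symm)]
    exact ⟨_, hxdim ▸ Submodule.finrank_mono inf_le_left, rfl⟩
  rw [B.le_orthogonal_self_iff_finrank_inf_eq, ← Submodule.finrank_eq_zero,
    ← Submodule.finrank_eq_zero (S := (x ⊔ y) ⊓ _)]
  generalize finrank F ↥(x ⊓ y) = d at *
  generalize finrank F ↥((x ⊔ y) ⊓ B.orthogonal (x ⊔ y)) = r at *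
  generalize finrank F ↥(x ⊔ y) = s at *
  interval_cases d
  · obtain ⟨a, ha, rfl⟩ := hrad rfl
    interval_cases a
    · exact ⟨4, by simp, fun j hj => by fin_cases j <;> simp_all⟩
    · exact ⟨3, by simp, fun j hj => by fin_cases j <;> simp_all⟩
    · exact ⟨1, by simp_all, fun j hj => by fin_cases j <;> simp_all⟩
  · by_cases hti : r = s
    · exact ⟨0, by simp [hti], fun j hj => by fin_cases j <;> simp_all⟩
    · exact ⟨2, by simp [hti], fun j hj => by fin_cases j <;> simp_all⟩

/-- Classification of pairs of distinct totally isotropic `2`-spaces `x ≠ y` in a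
nondegenerate symplectic space of dimension `2n` (`n ≥ 2`, `char F ≠ 2`): exactly one
of the five listed mutual positions holds. -/
theorem ti_two_spaces_five_relations
    {F V : Type*} [Field F] [AddCommGroup V] [Module F V] [FiniteDimensional F V]
    (hchar : (2 : F) ≠ 0)
    (n : ℕ) (hn : 2 ≤ n) (hdim : finrank F V = 2 * n)
    (B : LinearMap.BilinForm F V) (halt : B.IsAlt) (hnd : B.Nondegenerate)
    (x y : Submodule F V)
    (hx : x ≤ B.orthogonal x) (hy : y ≤ B.orthogonal y)
    (hxdim : finrank F x = 2) (hydim : finrank F y = 2) (hxy : x ≠ y) :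
    ∃! i : Fin 5,
      ![finrank F ↥(x ⊓ y) = 1 ∧ (x ⊔ y) ≤ B.orthogonal (x ⊔ y),
        x ⊓ y = ⊥ ∧ (x ⊔ y) ≤ B.orthogonal (x ⊔ y),
        finrank F ↥(x ⊓ y) = 1 ∧ ¬ (x ⊔ y) ≤ B.orthogonal (x ⊔ y),
        x ⊓ y = ⊥ ∧ finrank F ↥((x ⊔ y) ⊓ B.orthogonal (x ⊔ y)) = 2,
        x ⊓ y = ⊥ ∧ (x ⊔ y) ⊓ B.orthogonal (x ⊔ y) = ⊥] i :=
  ti_two_spaces_five_relations_general B halt hnd x y hx hy hxdim hydim hxy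
end
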